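/- Let V be a module and for each index i in a finite set I let η_i, ξ_i be endomorphisms with η_i² = 0, ξ_i² = 0, η_i ξ_i + ξ_i η_i = id, and suppose the projections e_i = η_i ξ_i pairwise commute. Then the composite P = ∏_{i∈I} e_i is idempotent and its image equals the intersection ⋂_{i∈I} Ker(η_i). -/

import Mathlib

open Module

/-!
Each `eᵢ = ηᵢ ξᵢ` is idempotent with range `ker ηᵢ`: one inclusion because `ηᵢ² = 0`, the other
because `x = ηᵢ ξᵢ x + ξᵢ ηᵢ x` for every `x`. A product of commuting idempotents is idempotent,
and its range is the intersection of their ranges.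
-/

theorem isIdempotentElem_mul_of_mul_self_eq_zero {A : Type*} [Ring A] {a b : A}
    (ha : a * a = 0) (hab : a * b + b * a = 1) : IsIdempotentElem (a * b) := by
  have hba : b * a = 1 - a * b := eq_sub_of_add_eq' hab
  calc a * b * (a * b) = a * (b * a) * b := by simp only [mul_assoc]
    _ = a * b := by rw [hba, mul_sub, mul_one, ← mul_assoc, ha, zero_mul, sub_zero]

theorem IsIdempotentElem.noncommProd {M ι : Type*} [Monoid M] {f : ι → M} (s : Finset ι) (comm)
    (hf : ∀ i ∈ s, IsIdempotentElem (f i)) : IsIdempotentElem (s.noncommProd f comm) := by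
  classical
  induction s using Finset.induction_on with
  | empty => exact IsIdempotentElem.one
  | insert i s hi ih =>
    rw [Finset.noncommProd_insert_of_notMem _ _ _ _ hi]
    refine IsIdempotentElem.mul_of_commute ?_ (hf i (s.mem_insert_self i))
      (ih _ fun j hj ↦ hf j (Finset.mem_insert_of_mem hj))
    exact s.noncommProd_commute _ _ _ fun j hj ↦
      comm (s.mem_insert_self i) (Finset.mem_insert_of_mem hj) (by rintro rfl; exact hi hj)

namespace LinearMap

variable {R M : Type*} [Semiring R] [AddCommMonoid M] [Module R M]

theorem range_mul_of_commute {p q : Module.End R M} (hpq : Commute p q)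
    (hp : IsIdempotentElem p) (hq : IsIdempotentElem q) :
    range (p * q) = range p ⊓ range q := by
  ext x
  simp only [Submodule.mem_inf, IsIdempotentElem.mem_range_iff (hp.mul_of_commute hpq hq),
    IsIdempotentElem.mem_range_iff hp, IsIdempotentElem.mem_range_iff hq, Module.End.mul_apply]
  refine ⟨fun hx ↦ ⟨?_, ?_⟩, fun ⟨hpx, hqx⟩ ↦ by rw [hqx, hpx]⟩
  · rw [← hx, ← Module.End.mul_apply p p, hp.eq]
  · rw [← hx, ← Module.End.mul_apply q p, ← hpq.eq, Module.End.mul_apply,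
      ← Module.End.mul_apply q q, hq.eq]

theorem range_noncommProd_of_isIdempotentElem {ι : Type*} {f : ι → Module.End R M}
    (s : Finset ι) (comm) (hf : ∀ i ∈ s, IsIdempotentElem (f i)) :
    range (s.noncommProd f comm) = ⨅ i ∈ s, range (f i) := by
  classical
  induction s using Finset.induction_on with
  | empty => simp [Module.End.one_eq_id]
  | insert i s hi ih =>
    have hs : ∀ j ∈ s, IsIdempotentElem (f j) := fun j hj ↦ hf j (Finset.mem_insert_of_mem hj)
    rw [Finset.noncommProd_insert_of_notMem _ _ _ _ hi, range_mul_of_commute _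
      (hf i (s.mem_insert_self i)) (IsIdempotentElem.noncommProd s _ hs), ih _ hs]
    · rw [Finset.iInf_insert]
    · exact s.noncommProd_commute _ _ _ fun j hj ↦
        comm (s.mem_insert_self i) (Finset.mem_insert_of_mem hj) (by rintro rfl; exact hi hj)

end LinearMap

theorem LinearMap.range_mul_eq_ker_of_mul_self_eq_zero {R M : Type*} [Ring R] [AddCommGroup M]
    [Module R M] {η ξ : Module.End R M} (hη : η * η = 0) (hηξ : η * ξ + ξ * η = 1) :
    range (η * ξ) = ker η := by
  refine le_antisymm ?_ fun x hx ↦ ⟨x, ?_⟩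
  · rintro _ ⟨y, rfl⟩
    rw [mem_ker, ← Module.End.mul_apply, ← mul_assoc, hη, zero_mul, zero_apply]
  · simpa [mem_ker.mp hx] using congr($hηξ x)

theorem product_projection_image_general {R M I : Type*} [CommRing R] [AddCommGroup M] [Module R M]
    [Fintype I] (η ξ : I → Module.End R M)
    (hη : ∀ i, η i * η i = 0)
    (hanti : ∀ i, η i * ξ i + ξ i * η i = 1)
    (hcomm : ∀ i j, Commute (η i * ξ i) (η j * ξ j))
    (P : Module.End R M)
    (hP : P = Finset.univ.noncommProd (fun i => η i * ξ i)
      (fun a _ b _ _ => hcomm a b)) :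
    P * P = P ∧ LinearMap.range P = ⨅ i, LinearMap.ker (η i) := by
  have he : ∀ i ∈ Finset.univ, IsIdempotentElem (η i * ξ i) :=
    fun i _ ↦ isIdempotentElem_mul_of_mul_self_eq_zero (hη i) (hanti i)
  subst hP
  refine ⟨(IsIdempotentElem.noncommProd _ _ he).eq, ?_⟩
  rw [LinearMap.range_noncommProd_of_isIdempotentElem _ (fun a _ b _ _ ↦ hcomm a b) he]
  simp_rw [Finset.mem_univ, iInf_true,
    LinearMap.range_mul_eq_ker_of_mul_self_eq_zero (hη _) (hanti _)]

theorem product_projection_image {R M I : Type*} [CommRing R] [AddCommGroup M] [Module R M]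
    [Fintype I] (η ξ : I → Module.End R M)
    (hη : ∀ i, η i * η i = 0) (hξ : ∀ i, ξ i * ξ i = 0)
    (hanti : ∀ i, η i * ξ i + ξ i * η i = 1)
    (hcomm : ∀ i j, Commute (η i * ξ i) (η j * ξ j))
    (P : Module.End R M)
    (hP : P = Finset.univ.noncommProd (fun i => η i * ξ i)
      (fun a _ b _ _ => hcomm a b)) :
    P * P = P ∧ LinearMap.range P = ⨅ i, LinearMap.ker (η i) :=
  product_projection_image_general η ξ hη hanti hcomm P hP
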